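/- Let F be an algebraically closed field, n > 1 an integer, and γ ∈ F. Consider the equation x^n = γ·1 + u₁ in the split octonion algebra O over F. If the image of n in F is nonzero and γ ≠ 0, then x is a solution if and only if there exists ξ₁ ∈ F with ξ₁^n = γ and x = ξ₁·1 + (ξ₁/(nγ))·u₁. If the image of n in F is zero or γ = 0, then the equation has no solution. -/

import Mathlib

noncomputable section

/-- The split octonion algebra over `F`, given by Zorn vector matrices
`(x1, u; v, x2)` with `x1, x2 ∈ F` and `u, v ∈ F³`. -/
@[ext]
structure SplitOctonion (F : Type*) where
  x1 : F
  u : Fin 3 → F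
  v : Fin 3 → F
  x2 : F

namespace SplitOctonion

variable {F : Type*} [Field F]

/-- Dot product on `F³`. -/
def dot (x y : Fin 3 → F) : F := x 0 * y 0 + x 1 * y 1 + x 2 * y 2

/-- Cross product on `F³`. -/
def cross (x y : Fin 3 → F) : Fin 3 → F :=
  ![x 1 * y 2 - x 2 * y 1, x 2 * y 0 - x 0 * y 2, x 0 * y 1 - x 1 * y 0]

instance : Zero (SplitOctonion F) := ⟨⟨0, 0, 0, 0⟩⟩
instance : One (SplitOctonion F) := ⟨⟨1, 0, 0, 1⟩⟩
instance : Add (SplitOctonion F) :=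
  ⟨fun x y => ⟨x.x1 + y.x1, x.u + y.u, x.v + y.v, x.x2 + y.x2⟩⟩
instance : Neg (SplitOctonion F) := ⟨fun x => ⟨-x.x1, -x.u, -x.v, -x.x2⟩⟩
instance : SMul F (SplitOctonion F) :=
  ⟨fun c x => ⟨c * x.x1, c • x.u, c • x.v, c * x.x2⟩⟩

/-- Zorn vector matrix multiplication. -/
instance : Mul (SplitOctonion F) :=
  ⟨fun x y => ⟨x.x1 * y.x1 + dot x.u y.v,
    x.x1 • y.u + y.x2 • x.u - cross x.v y.v,
    y.x1 • x.v + x.x2 • y.v + cross x.u y.u,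
    x.x2 * y.x2 + dot x.v y.u⟩⟩

@[simp] lemma zero_x1 : (0 : SplitOctonion F).x1 = 0 := rfl
@[simp] lemma zero_u : (0 : SplitOctonion F).u = 0 := rfl
@[simp] lemma zero_v : (0 : SplitOctonion F).v = 0 := rfl
@[simp] lemma zero_x2 : (0 : SplitOctonion F).x2 = 0 := rfl
@[simp] lemma add_x1 (x y : SplitOctonion F) : (x + y).x1 = x.x1 + y.x1 := rfl
@[simp] lemma add_u (x y : SplitOctonion F) : (x + y).u = x.u + y.u := rfl
@[simp] lemma add_v (x y : SplitOctonion F) : (x + y).v = x.v + y.v := rfl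
@[simp] lemma add_x2 (x y : SplitOctonion F) : (x + y).x2 = x.x2 + y.x2 := rfl
@[simp] lemma neg_x1 (x : SplitOctonion F) : (-x).x1 = -x.x1 := rfl
@[simp] lemma neg_u (x : SplitOctonion F) : (-x).u = -x.u := rfl
@[simp] lemma neg_v (x : SplitOctonion F) : (-x).v = -x.v := rfl
@[simp] lemma neg_x2 (x : SplitOctonion F) : (-x).x2 = -x.x2 := rfl
@[simp] lemma smul_x1 (c : F) (x : SplitOctonion F) : (c • x).x1 = c * x.x1 := rfl
@[simp] lemma smul_u (c : F) (x : SplitOctonion F) : (c • x).u = c • x.u := rfl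
@[simp] lemma smul_v (c : F) (x : SplitOctonion F) : (c • x).v = c • x.v := rfl
@[simp] lemma smul_x2 (c : F) (x : SplitOctonion F) : (c • x).x2 = c * x.x2 := rfl

instance : AddCommGroup (SplitOctonion F) where
  add_assoc x y z := by ext <;> simp [add_assoc]
  zero_add x := by ext <;> simp
  add_zero x := by ext <;> simp
  add_comm x y := by ext <;> simp [add_comm]
  neg_add_cancel x := by ext <;> simp
  nsmul := nsmulRec
  zsmul := zsmulRec

instance : Module F (SplitOctonion F) where
  one_smul x := by ext <;> simp
  mul_smul c d x := by ext <;> simp [mul_assoc, mul_smul]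
  smul_zero c := by ext <;> simp
  smul_add c x y := by ext <;> simp [mul_add, smul_add]
  add_smul c d x := by ext <;> simp [add_mul, add_smul]
  zero_smul x := by ext <;> simp

/-- Powers of a single octonion (well defined by power-associativity). -/
def npow (x : SplitOctonion F) : ℕ → SplitOctonion F
  | 0 => 1
  | n + 1 => npow x n * x

instance : Pow (SplitOctonion F) ℕ := ⟨npow⟩

/-- Substitution of an octonion into a polynomial over `F`:
`f(x) = αₙ xⁿ + ⋯ + α₁ x + α₀ • 1`. -/
def peval (f : Polynomial F) (x : SplitOctonion F) : SplitOctonion F :=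
  f.sum fun i c => c • x ^ i

/-- The octonion `e₁`. -/
def e1 : SplitOctonion F := ⟨1, 0, 0, 0⟩
/-- The octonion `e₂`. -/
def e2 : SplitOctonion F := ⟨0, 0, 0, 1⟩
/-- The octonion `u₁`. -/
def u1 : SplitOctonion F := ⟨0, ![1, 0, 0], 0, 0⟩

/-- Conjugation on `O`. -/
def conj (x : SplitOctonion F) : SplitOctonion F := ⟨x.x2, -x.u, -x.v, x.x1⟩

/-- The norm of an octonion. -/
def normO (x : SplitOctonion F) : F := x.x1 * x.x2 - dot x.u x.v

/-- The trace of an octonion. -/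
def trO (x : SplitOctonion F) : F := x.x1 + x.x2

/-- `g` is an `F`-algebra automorphism of `O`: a linear bijection preserving
multiplication (and the unit). -/
def IsAlgAut (g : SplitOctonion F ≃ₗ[F] SplitOctonion F) : Prop :=
  g 1 = 1 ∧ ∀ x y, g (x * y) = g x * g y

end SplitOctonion

/-!
`O` is a quadratic algebra: `x * x = tr(x) • x - N(x) • 1`, so every power of `x` is a linear
combination `p • x + q • 1`. If `x ^ n = γ • 1 + u₁`, then `p ≠ 0`, hence `x = α • 1 + w` with
`w` in the `u`-slot. Such elements multiply like dual numbers (`w * w = 0` since `w × w = 0`), so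
`x ^ n = αⁿ • 1 + (n αⁿ⁻¹) • w`. Everything then reduces to `αⁿ = γ` and `n αⁿ⁻¹ • w = e₁`,
which is solvable exactly when `n ≠ 0` in `F` and `α ≠ 0`, i.e. `γ ≠ 0`.
-/

namespace SplitOctonion

variable {F : Type*} [Field F]

@[simp] lemma one_x1 : (1 : SplitOctonion F).x1 = 1 := rfl
@[simp] lemma one_u : (1 : SplitOctonion F).u = 0 := rfl
@[simp] lemma one_v : (1 : SplitOctonion F).v = 0 := rfl
@[simp] lemma one_x2 : (1 : SplitOctonion F).x2 = 1 := rfl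
@[simp] lemma mul_x1 (x y : SplitOctonion F) : (x * y).x1 = x.x1 * y.x1 + dot x.u y.v := rfl
@[simp] lemma mul_u (x y : SplitOctonion F) :
    (x * y).u = x.x1 • y.u + y.x2 • x.u - cross x.v y.v := rfl
@[simp] lemma mul_v (x y : SplitOctonion F) :
    (x * y).v = y.x1 • x.v + x.x2 • y.v + cross x.u y.u := rfl
@[simp] lemma mul_x2 (x y : SplitOctonion F) : (x * y).x2 = x.x2 * y.x2 + dot x.v y.u := rfl

lemma pow_zero (x : SplitOctonion F) : x ^ 0 = 1 := rfl

lemma pow_succ (x : SplitOctonion F) (k : ℕ) : x ^ (k + 1) = x ^ k * x := rfl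

lemma cross_eq_crossProduct (x y : Fin 3 → F) : cross x y = crossProduct x y := rfl

lemma add_mul (x y z : SplitOctonion F) : (x + y) * z = x * z + y * z := by
  ext : 1
  · simp only [mul_x1, add_x1, add_u, dot, Pi.add_apply]; ring
  · simp only [mul_u, add_x1, add_u, add_v, cross_eq_crossProduct, map_add, LinearMap.add_apply]
    module
  · simp only [mul_v, add_x2, add_u, add_v, cross_eq_crossProduct, map_add, LinearMap.add_apply]
    module
  · simp only [mul_x2, add_x2, add_v, dot, Pi.add_apply]; ring

lemma smul_mul (c : F) (x y : SplitOctonion F) : (c • x) * y = c • (x * y) := by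
  ext : 1
  · simp only [mul_x1, smul_x1, smul_u, dot, Pi.smul_apply, smul_eq_mul]; ring
  · simp only [mul_u, smul_x1, smul_u, smul_v, cross_eq_crossProduct, map_smul,
      LinearMap.smul_apply]
    module
  · simp only [mul_v, smul_x2, smul_u, smul_v, cross_eq_crossProduct, map_smul,
      LinearMap.smul_apply]
    module
  · simp only [mul_x2, smul_x2, smul_v, dot, Pi.smul_apply, smul_eq_mul]; ring

lemma one_mul (x : SplitOctonion F) : 1 * x = x := by
  ext : 1 <;> simp [dot, cross_eq_crossProduct]

lemma mul_self_eq (x : SplitOctonion F) : x * x = trO x • x - normO x • 1 := by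
  ext : 1
  · simp only [mul_x1, sub_eq_add_neg, add_x1, neg_x1, smul_x1, one_x1, trO, normO, dot]; ring
  · simp only [mul_u, cross_eq_crossProduct, cross_self, sub_eq_add_neg, add_u, neg_u, smul_u,
      one_u, trO]
    module
  · simp only [mul_v, cross_eq_crossProduct, cross_self, sub_eq_add_neg, add_v, neg_v, smul_v,
      one_v, trO]
    module
  · simp only [mul_x2, sub_eq_add_neg, add_x2, neg_x2, smul_x2, one_x2, trO, normO, dot]; ring

lemma exists_pow_eq_smul_add_smul_one (x : SplitOctonion F) (k : ℕ) :
    ∃ p q : F, x ^ k = p • x + q • (1 : SplitOctonion F) := by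
  induction k with
  | zero => exact ⟨0, 1, by rw [zero_smul, zero_add, one_smul]; rfl⟩
  | succ k ih =>
    obtain ⟨p, q, hk⟩ := ih
    refine ⟨p * trO x + q, -(p * normO x), ?_⟩
    rw [pow_succ, hk, add_mul, smul_mul, smul_mul, one_mul, mul_self_eq]
    module

lemma mk_pow (α : F) (w : Fin 3 → F) (k : ℕ) :
    (⟨α, w, 0, α⟩ : SplitOctonion F) ^ k = ⟨α ^ k, ((k : F) * α ^ (k - 1)) • w, 0, α ^ k⟩ := by
  induction k with
  | zero => rw [pow_zero]; ext : 1 <;> simp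
  | succ k ih =>
    have hcoeff : α ^ k + α * ((k : F) * α ^ (k - 1)) = ((k + 1 : ℕ) : F) * α ^ k := by
      cases k
      · simp
      · simp only [Nat.cast_add, Nat.cast_one, Nat.add_sub_cancel, _root_.pow_succ]; ring
    rw [pow_succ, ih]
    ext : 1
    · simp [dot, _root_.pow_succ]
    · simp [cross_eq_crossProduct, smul_smul, ← add_smul, hcoeff]
    · simp [cross_eq_crossProduct, cross_self]
    · simp [dot, _root_.pow_succ]

lemma smul_one_add_smul_u1 (α c : F) :
    α • (1 : SplitOctonion F) + c • u1 = ⟨α, c • ![1, 0, 0], 0, α⟩ := by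
  ext : 1 <;> simp [u1, Matrix.smul_cons]

lemma eq_mk_of_pow_eq_smul_one_add_u1 {n : ℕ} {γ : F} {x : SplitOctonion F}
    (h : x ^ n = γ • (1 : SplitOctonion F) + u1) : x = ⟨x.x1, x.u, 0, x.x1⟩ := by
  obtain ⟨p, q, hpq⟩ := exists_pow_eq_smul_add_smul_one x n
  rw [hpq] at h
  -- `x ^ n ∉ F • 1` forces `p ≠ 0`, and then `x` inherits the shape of `γ • 1 + u₁`.
  have hp : p ≠ 0 := by
    rintro rfl
    simpa [u1] using congrFun (congrArg SplitOctonion.u h) 0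
  have hv : p • x.v = 0 := by simpa [u1] using congrArg SplitOctonion.v h
  have hx : p * x.x1 + q = p * x.x2 + q := by
    simpa [u1] using (congrArg SplitOctonion.x1 h).trans (congrArg SplitOctonion.x2 h).symm
  ext <;> simp_all

lemma pow_eq_smul_one_add_u1_iff_exists_mk (n : ℕ) (γ : F) (x : SplitOctonion F) :
    x ^ n = γ • (1 : SplitOctonion F) + u1 ↔
      ∃ α w, x = ⟨α, w, 0, α⟩ ∧ α ^ n = γ ∧ ((n : F) * α ^ (n - 1)) • w = ![1, 0, 0] := by
  constructor
  · intro h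
    have hx := eq_mk_of_pow_eq_smul_one_add_u1 h
    rw [hx, mk_pow, ← one_smul F u1, smul_one_add_smul_u1, one_smul] at h
    exact ⟨x.x1, x.u, hx, congrArg SplitOctonion.x1 h, congrArg SplitOctonion.u h⟩
  · rintro ⟨α, w, rfl, hα, hw⟩
    rw [mk_pow, hα, hw, ← one_smul F (![1, 0, 0] : Fin 3 → F), ← smul_one_add_smul_u1, one_smul]

lemma natCast_mul_pow_pred_mul_div_eq_one {n : ℕ} {α : F} (hn : (n : F) ≠ 0) (hα : α ^ n ≠ 0) :
    ((n : F) * α ^ (n - 1)) * (α / ((n : F) * α ^ n)) = 1 := by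
  cases n with
  | zero => simp at hn
  | succ k =>
    rw [Nat.add_sub_cancel, _root_.pow_succ]
    rw [_root_.pow_succ] at hα
    field_simp
    exact div_self hα

end SplitOctonion

open SplitOctonion in
theorem pow_eq_smul_one_add_u1_iff_general {F : Type*} [Field F]
    (n : ℕ) (hn : 1 < n) (γ : F) :
    ((n : F) ≠ 0 ∧ γ ≠ 0 →
      ∀ x : SplitOctonion F,
        x ^ n = γ • (1 : SplitOctonion F) + u1 ↔
          ∃ ξ₁ : F, ξ₁ ^ n = γ ∧
            x = ξ₁ • (1 : SplitOctonion F) + (ξ₁ / ((n : F) * γ)) • u1) ∧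
    ((n : F) = 0 ∨ γ = 0 →
      ∀ x : SplitOctonion F, x ^ n ≠ γ • (1 : SplitOctonion F) + u1) := by
  refine ⟨fun ⟨hn0, hγ⟩ x => ?_, fun hdeg x hx => ?_⟩
  · rw [pow_eq_smul_one_add_u1_iff_exists_mk]
    constructor
    · rintro ⟨α, w, rfl, rfl, hw⟩
      refine ⟨α, rfl, ?_⟩
      rw [smul_one_add_smul_u1, ← hw, smul_smul, mul_comm,
        natCast_mul_pow_pred_mul_div_eq_one hn0 hγ, one_smul]
    · rintro ⟨ξ, rfl, rfl⟩
      refine ⟨ξ, _, smul_one_add_smul_u1 _ _, rfl, ?_⟩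
      rw [smul_smul, natCast_mul_pow_pred_mul_div_eq_one hn0 hγ, one_smul]
  · obtain ⟨α, w, -, rfl, hw⟩ := (pow_eq_smul_one_add_u1_iff_exists_mk n γ x).1 hx
    have hcoeff : (n : F) * α ^ (n - 1) ≠ 0 := by
      rintro h0
      simpa [h0] using congrFun hw 0
    rcases hdeg with hn0 | hα
    · simp [hn0] at hcoeff
    · simp [pow_eq_zero_iff (by omega : n ≠ 0)] at hα
      simp [hα, Nat.sub_ne_zero_of_lt hn] at hcoeff

open SplitOctonion in
/-- the `n`-th roots of `γ·1 + u₁`. -/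
theorem pow_eq_smul_one_add_u1_iff {F : Type*} [Field F] [IsAlgClosed F]
    (n : ℕ) (hn : 1 < n) (γ : F) :
    ((n : F) ≠ 0 ∧ γ ≠ 0 →
      ∀ x : SplitOctonion F,
        x ^ n = γ • (1 : SplitOctonion F) + u1 ↔
          ∃ ξ₁ : F, ξ₁ ^ n = γ ∧
            x = ξ₁ • (1 : SplitOctonion F) + (ξ₁ / ((n : F) * γ)) • u1) ∧
    ((n : F) = 0 ∨ γ = 0 →
      ∀ x : SplitOctonion F, x ^ n ≠ γ • (1 : SplitOctonion F) + u1) :=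
  pow_eq_smul_one_add_u1_iff_general n hn γ
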